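/- arXiv:2410.21114 — 2 statements merged into one kernel-verified Lean document; each statement's English description precedes it below -/
import Mathlib

section
/- (Existence of strong one-sided traces.) For every (x,t) ∈ ℝ × (0,∞): (i) lim_{x′→x⁻} u⁻(x′,t) = lim_{x′→x⁻} u⁺(x′,t) = u⁻(x,t) and lim_{x′→x⁺} u⁻(x′,t) = lim_{x′→x⁺} u⁺(x′,t) = u⁺(x,t); in particular the candidate entropy solution u := u⁺ has one-sided limits everywhere, with left trace u(x−,t) = u⁻(x,t) and right trace u(x+,t) = u⁺(x,t). (ii) If (xₙ,tₙ) → (x,t) in ℝ × (0,∞) and the sequence u⁺(xₙ,tₙ) (respectively u⁻(xₙ,tₙ)) converges, then its limit belongs to 𝒰(x,t). -/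
/-!
The substitution `y = x - t f'(s)` rewrites
`E(u; x, t) = Φ(x - t f'(0)) - Φ(x - t f'(u)) - t (f*(f'(u)) - f*(f'(0)))`,
with `Φ` a primitive of `φ` and `f*` the Legendre transform of `f`. As `Φ` is `M`-Lipschitz and
`f` is strictly convex, maximizers lie in `[-M, M]`; as `E` is jointly continuous, limits of
maximizers are maximizers, which is (ii). Strict convexity of `f*` shows, by exchanging maximizers,
that the foot `x - t f'(w)` of a maximizer `w ∈ 𝒰(x, t)` is nondecreasing in `x`: characteristics
do not cross. Hence, as `x' → x⁻`, every cluster point of maximizers at `x'` is a maximizer at `x`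
dominating all of `𝒰(x, t)`, i.e. it is `u⁻(x, t)`; symmetrically from the right with `u⁺(x, t)`.
-/

open MeasureTheory Filter Set

noncomputable def eFun (f φ : ℝ → ℝ) (u x t : ℝ) : ℝ :=
  t * (∫ s in (0:ℝ)..u, deriv (deriv f) s * (φ (x - t * deriv f s) - s))

def maxSet (f φ : ℝ → ℝ) (x t : ℝ) : Set ℝ :=
  {w : ℝ | ∀ v : ℝ, eFun f φ v x t ≤ eFun f φ w x t}

noncomputable def uPlus (f φ : ℝ → ℝ) (x t : ℝ) : ℝ := sInf (maxSet f φ x t)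

noncomputable def uMinus (f φ : ℝ → ℝ) (x t : ℝ) : ℝ := sSup (maxSet f φ x t)

open Topology

theorem Monotone.strictMono_of_volume_deriv_eq_zero {g : ℝ → ℝ} (hg : Monotone g)
    (hnull : volume {u | deriv g u = 0} = 0) : StrictMono g := by
  intro a b hab
  refine (hg hab.le).lt_of_ne fun heq => ?_
  have hflat : Ioo a b ⊆ {u | deriv g u = 0} := fun s hs => by
    have hconst : g =ᶠ[𝓝 s] fun _ => g a := by
      filter_upwards [Ioo_mem_nhds hs.1 hs.2] with y hy
      exact le_antisymm (heq ▸ hg hy.2.le) (hg hy.1.le)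
    simpa using hconst.deriv_eq
  have := measure_mono_null hflat hnull
  simp only [Real.volume_Ioo, ENNReal.ofReal_eq_zero, sub_nonpos] at this
  exact this.not_gt hab

section Legendre

variable {f : ℝ → ℝ} {a b c d : ℝ}

/-- The Legendre transform `f*` evaluated at the slope `f' u`. -/
noncomputable def legendreDual (f : ℝ → ℝ) (u : ℝ) : ℝ := u * deriv f u - f u

theorem legendreDual_sub_lt (hf : Differentiable ℝ f) (hf' : StrictMono (deriv f)) (hab : a < b) :
    legendreDual f b - legendreDual f a < b * (deriv f b - deriv f a) := by
  have h := (hf'.strictConvexOn_univ_of_deriv hf.continuous).deriv_lt_slope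
    (mem_univ a) (mem_univ b) hab (hf a)
  rw [slope_def_field, lt_div_iff₀ (sub_pos.2 hab)] at h
  unfold legendreDual
  linarith

theorem lt_legendreDual_sub (hf : Differentiable ℝ f) (hf' : StrictMono (deriv f)) (hab : a < b) :
    a * (deriv f b - deriv f a) < legendreDual f b - legendreDual f a := by
  have h := (hf'.strictConvexOn_univ_of_deriv hf.continuous).slope_lt_deriv
    (mem_univ a) (mem_univ b) hab (hf b)
  rw [slope_def_field, div_lt_iff₀ (sub_pos.2 hab)] at h
  unfold legendreDual
  linarith

theorem legendreDual_add_lt_of_le (hf : Differentiable ℝ f) (hf' : StrictMono (deriv f))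
    (hab : a < b) (hbc : b ≤ c) (hcd : c < d)
    (hslope : deriv f b - deriv f a = deriv f d - deriv f c) :
    legendreDual f b + legendreDual f c < legendreDual f a + legendreDual f d := by
  have hε : 0 ≤ deriv f b - deriv f a := sub_nonneg.2 (hf'.monotone hab.le)
  have hleft := legendreDual_sub_lt hf hf' hab
  have hright := lt_legendreDual_sub hf hf' hcd
  rw [← hslope] at hright
  linarith [mul_le_mul_of_nonneg_right hbc hε]

/-- Strict convexity of `f*`: moving two slopes towards each other by the same amount decreases
`f*(p₁) + f*(p₂)`. -/
theorem legendreDual_add_lt (hf : Differentiable ℝ f) (hf' : StrictMono (deriv f))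
    (hab : a < b) (hac : a < c) (hbd : b < d) (hcd : c < d)
    (hslope : deriv f b - deriv f a = deriv f d - deriv f c) :
    legendreDual f b + legendreDual f c < legendreDual f a + legendreDual f d := by
  rcases le_total b c with hbc | hcb
  · exact legendreDual_add_lt_of_le hf hf' hab hbc hcd hslope
  · linarith [legendreDual_add_lt_of_le hf hf' hac hcb hbd (by linarith)]

theorem hasDerivAt_legendreDual (hf : ContDiff ℝ 2 f) (u : ℝ) :
    HasDerivAt (legendreDual f) (u * deriv (deriv f) u) u := by
  have hf1 : Differentiable ℝ f := hf.differentiable (by norm_num)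
  have hf2 : Differentiable ℝ (deriv f) := (hf.iterate_deriv' 1 1).differentiable one_ne_zero
  exact (((hasDerivAt_id' u).fun_mul (hf2 u).hasDerivAt).fun_sub (hf1 u).hasDerivAt).congr_deriv
    (by ring)

end Legendre

section HopfLax

variable {f φ : ℝ → ℝ} {M t : ℝ}

noncomputable def primitive (φ : ℝ → ℝ) (y : ℝ) : ℝ := ∫ s in (0 : ℝ)..y, φ s

theorem abs_primitive_sub_le (hφ : ∀ a b, IntervalIntegrable φ volume a b)
    (hφM : ∀ y, |φ y| ≤ M) (a b : ℝ) :
    |primitive φ b - primitive φ a| ≤ M * |b - a| := by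
  rw [primitive, primitive, intervalIntegral.integral_interval_sub_left (hφ 0 b) (hφ 0 a)]
  exact intervalIntegral.norm_integral_le_of_norm_le_const fun y _ =>
    (Real.norm_eq_abs _).trans_le (hφM y)

theorem eFun_eq (hf : ContDiff ℝ 2 f) (hf' : Monotone (deriv f))
    (hφ : ∀ a b, IntervalIntegrable φ volume a b) (ht : 0 ≤ t) (u x : ℝ) :
    eFun f φ u x t = primitive φ (x - t * deriv f 0) - primitive φ (x - t * deriv f u)
      - t * (legendreDual f u - legendreDual f 0) := by
  have hf2 : Differentiable ℝ (deriv f) := (hf.iterate_deriv' 1 1).differentiable one_ne_zero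
  have hf2c : Continuous (deriv (deriv f)) := (hf.iterate_deriv' 0 2).continuous
  set ψ : ℝ → ℝ := fun s => x - t * deriv f s with hψ_def
  have hψ : ∀ s, HasDerivAt ψ (-(t * deriv (deriv f) s)) s := fun s =>
    ((hf2 s).hasDerivAt.const_mul t).const_sub x
  have hψ_nonpos : ∀ s, -(t * deriv (deriv f) s) ≤ 0 := fun s =>
    neg_nonpos.2 (mul_nonneg ht hf'.deriv_nonneg)
  have hψc : Continuous ψ := continuous_iff_continuousAt.2 fun s => (hψ s).continuousAt
  have hsubst : ∫ s in (0 : ℝ)..u, (φ ∘ ψ) s * -(t * deriv (deriv f) s) = ∫ y in ψ 0..ψ u, φ y :=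
    intervalIntegral.integral_comp_mul_deriv_of_deriv_nonpos hψc.continuousOn
      (fun s _ => hψ s) (fun s _ => hψ_nonpos s)
  have hint : IntervalIntegrable (fun s => -((φ ∘ ψ) s * -(t * deriv (deriv f) s))) volume 0 u :=
    IntervalIntegrable.neg <| (intervalIntegral.integrable_comp_mul_deriv_iff_of_deriv_nonpos
      hψc.continuousOn (fun s _ => hψ s) (fun s _ => hψ_nonpos s)).2 (hφ _ _)
  have hftc : ∫ s in (0 : ℝ)..u, s * deriv (deriv f) s = legendreDual f u - legendreDual f 0 :=
    intervalIntegral.integral_eq_sub_of_hasDerivAt (fun s _ => hasDerivAt_legendreDual hf s)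
      ((continuous_id.mul hf2c).intervalIntegrable _ _)
  calc eFun f φ u x t
      = ∫ s in (0 : ℝ)..u, -((φ ∘ ψ) s * -(t * deriv (deriv f) s))
          - t * (s * deriv (deriv f) s) := by
        rw [eFun, ← intervalIntegral.integral_const_mul]
        congr 1 with s
        simp only [hψ_def, Function.comp]
        ring
    _ = primitive φ (ψ 0) - primitive φ (ψ u) - t * (legendreDual f u - legendreDual f 0) := by
        have hB : IntervalIntegrable (fun s => t * (s * deriv (deriv f) s)) volume 0 u :=
          (by fun_prop : Continuous fun s => t * (s * deriv (deriv f) s)).intervalIntegrable _ _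
        rw [intervalIntegral.integral_sub hint hB, intervalIntegral.integral_neg,
          intervalIntegral.integral_const_mul, hsubst, hftc, primitive, primitive,
          ← intervalIntegral.integral_interval_sub_left (hφ 0 (ψ u)) (hφ 0 (ψ 0))]
        ring

theorem eFun_sub_le (hf : ContDiff ℝ 2 f) (hf' : Monotone (deriv f))
    (hφ : ∀ a b, IntervalIntegrable φ volume a b) (hφM : ∀ y, |φ y| ≤ M) (ht : 0 ≤ t)
    (v w x : ℝ) :
    eFun f φ v x t - eFun f φ w x t
      ≤ t * (M * |deriv f v - deriv f w| - (legendreDual f v - legendreDual f w)) := by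
  have h := abs_primitive_sub_le hφ hφM (x - t * deriv f v) (x - t * deriv f w)
  rw [show x - t * deriv f w - (x - t * deriv f v) = t * (deriv f v - deriv f w) by ring,
    abs_mul, abs_of_nonneg ht] at h
  rw [eFun_eq hf hf' hφ ht, eFun_eq hf hf' hφ ht]
  linarith [le_abs_self (primitive φ (x - t * deriv f w) - primitive φ (x - t * deriv f v))]

theorem eFun_lt_eFun_of_lt (hf : ContDiff ℝ 2 f) (hf' : StrictMono (deriv f))
    (hφ : ∀ a b, IntervalIntegrable φ volume a b) (hφM : ∀ y, |φ y| ≤ M) (ht : 0 < t)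
    {v : ℝ} (hv : M < v) (x : ℝ) : eFun f φ v x t < eFun f φ M x t := by
  have h := eFun_sub_le hf hf'.monotone hφ hφM ht.le v M x
  have hℓ := lt_legendreDual_sub (hf.differentiable (by norm_num)) hf' hv
  rw [abs_of_pos (sub_pos.2 (hf' hv))] at h
  nlinarith

theorem eFun_lt_eFun_neg_of_lt_neg (hf : ContDiff ℝ 2 f) (hf' : StrictMono (deriv f))
    (hφ : ∀ a b, IntervalIntegrable φ volume a b) (hφM : ∀ y, |φ y| ≤ M) (ht : 0 < t)
    {v : ℝ} (hv : v < -M) (x : ℝ) : eFun f φ v x t < eFun f φ (-M) x t := by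
  have h := eFun_sub_le hf hf'.monotone hφ hφM ht.le v (-M) x
  have hℓ := legendreDual_sub_lt (hf.differentiable (by norm_num)) hf' hv
  rw [abs_of_neg (sub_neg.2 (hf' hv))] at h
  nlinarith

theorem maxSet_subset_Icc (hf : ContDiff ℝ 2 f) (hf' : StrictMono (deriv f))
    (hφ : ∀ a b, IntervalIntegrable φ volume a b) (hφM : ∀ y, |φ y| ≤ M) (ht : 0 < t) (x : ℝ) :
    maxSet f φ x t ⊆ Icc (-M) M := fun _ hw =>
  ⟨not_lt.1 fun h => (hw (-M)).not_gt (eFun_lt_eFun_neg_of_lt_neg hf hf' hφ hφM ht h x),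
    not_lt.1 fun h => (hw M).not_gt (eFun_lt_eFun_of_lt hf hf' hφ hφM ht h x)⟩

theorem continuousOn_eFun (hf : ContDiff ℝ 2 f) (hf' : Monotone (deriv f))
    (hφ : ∀ a b, IntervalIntegrable φ volume a b) :
    ContinuousOn (fun p : ℝ × ℝ × ℝ => eFun f φ p.1 p.2.1 p.2.2) {p | 0 < p.2.2} := by
  have hΦ : Continuous (primitive φ) := intervalIntegral.continuous_primitive hφ 0
  have hℓ : Continuous (legendreDual f) :=
    continuous_iff_continuousAt.2 fun u => (hasDerivAt_legendreDual hf u).continuousAt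
  have hf1 : Continuous (deriv f) := hf.continuous_deriv (by norm_num)
  have hrepr : Continuous fun p : ℝ × ℝ × ℝ =>
      primitive φ (p.2.1 - p.2.2 * deriv f 0) - primitive φ (p.2.1 - p.2.2 * deriv f p.1)
        - p.2.2 * (legendreDual f p.1 - legendreDual f 0) := by fun_prop
  exact hrepr.continuousOn.congr fun p hp => eFun_eq hf hf' hφ (le_of_lt hp) p.1 p.2.1

theorem continuous_eFun (hf : ContDiff ℝ 2 f) (hf' : Monotone (deriv f))
    (hφ : ∀ a b, IntervalIntegrable φ volume a b) (ht : 0 < t) (x : ℝ) :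
    Continuous fun u => eFun f φ u x t :=
  (continuousOn_eFun hf hf' hφ).comp_continuous
    (continuous_id.prodMk continuous_const : Continuous fun u : ℝ => (u, x, t)) fun _ => ht

theorem maxSet_nonempty (hf : ContDiff ℝ 2 f) (hf' : StrictMono (deriv f))
    (hφ : ∀ a b, IntervalIntegrable φ volume a b) (hφM : ∀ y, |φ y| ≤ M) (ht : 0 < t) (x : ℝ) :
    (maxSet f φ x t).Nonempty := by
  have hM : -M ≤ M := by linarith [(abs_nonneg _).trans (hφM 0)]
  obtain ⟨w, -, hw⟩ := isCompact_Icc.exists_isMaxOn (nonempty_Icc.2 hM)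
    (continuous_eFun hf hf'.monotone hφ ht x).continuousOn
  refine ⟨w, fun v => ?_⟩
  rcases lt_or_ge v (-M) with hv | hv
  · exact (eFun_lt_eFun_neg_of_lt_neg hf hf' hφ hφM ht hv x).le.trans (hw ⟨le_rfl, hM⟩)
  rcases le_or_gt v M with hv' | hv'
  · exact hw ⟨hv, hv'⟩
  · exact (eFun_lt_eFun_of_lt hf hf' hφ hφM ht hv' x).le.trans (hw ⟨hM, le_rfl⟩)

theorem isClosed_maxSet (hf : ContDiff ℝ 2 f) (hf' : Monotone (deriv f))
    (hφ : ∀ a b, IntervalIntegrable φ volume a b) (ht : 0 < t) (x : ℝ) :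
    IsClosed (maxSet f φ x t) := by
  simp only [maxSet, ofPred_forall]
  exact isClosed_iInter fun v => isClosed_le continuous_const (continuous_eFun hf hf' hφ ht x)

theorem uPlus_mem_maxSet (hf : ContDiff ℝ 2 f) (hf' : StrictMono (deriv f))
    (hφ : ∀ a b, IntervalIntegrable φ volume a b) (hφM : ∀ y, |φ y| ≤ M) (ht : 0 < t) (x : ℝ) :
    uPlus f φ x t ∈ maxSet f φ x t :=
  (isClosed_maxSet hf hf'.monotone hφ ht x).csInf_mem (maxSet_nonempty hf hf' hφ hφM ht x)
    (bddBelow_Icc.mono (maxSet_subset_Icc hf hf' hφ hφM ht x))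

theorem uMinus_mem_maxSet (hf : ContDiff ℝ 2 f) (hf' : StrictMono (deriv f))
    (hφ : ∀ a b, IntervalIntegrable φ volume a b) (hφM : ∀ y, |φ y| ≤ M) (ht : 0 < t) (x : ℝ) :
    uMinus f φ x t ∈ maxSet f φ x t :=
  (isClosed_maxSet hf hf'.monotone hφ ht x).csSup_mem (maxSet_nonempty hf hf' hφ hφM ht x)
    (bddAbove_Icc.mono (maxSet_subset_Icc hf hf' hφ hφM ht x))

theorem mem_maxSet_of_tendsto (hf : ContDiff ℝ 2 f) (hf' : Monotone (deriv f))
    (hφ : ∀ a b, IntervalIntegrable φ volume a b) (ht : 0 < t) {ι : Type*} {l : Filter ι}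
    [l.NeBot] {xs ts ws : ι → ℝ} {x L : ℝ} (hxs : Tendsto xs l (𝓝 x)) (hts : Tendsto ts l (𝓝 t))
    (hws : Tendsto ws l (𝓝 L)) (hmem : ∀ᶠ i in l, ws i ∈ maxSet f φ (xs i) (ts i)) :
    L ∈ maxSet f φ x t := by
  have hE : ∀ {us : ι → ℝ} {u : ℝ}, Tendsto us l (𝓝 u) →
      Tendsto (fun i => eFun f φ (us i) (xs i) (ts i)) l (𝓝 (eFun f φ u x t)) := fun hus =>
    ((continuousOn_eFun hf hf' hφ).continuousAt
      ((isOpen_lt continuous_const continuous_snd.snd).mem_nhds ht)).tendsto.comp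
      (hus.prodMk_nhds (hxs.prodMk_nhds hts))
  exact fun v =>
    le_of_tendsto_of_tendsto (hE tendsto_const_nhds) (hE hws) (hmem.mono fun i hi => hi v)

end HopfLax

section Traces

variable {f φ : ℝ → ℝ} {M t : ℝ}

theorem foot_le_foot (hf : ContDiff ℝ 2 f) (hf' : StrictMono (deriv f))
    (hφ : ∀ a b, IntervalIntegrable φ volume a b) (ht : 0 < t) {x₁ x₂ w₁ w₂ : ℝ} (hx : x₁ < x₂)
    (hw₁ : w₁ ∈ maxSet f φ x₁ t) (hw₂ : w₂ ∈ maxSet f φ x₂ t) :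
    x₁ - t * deriv f w₁ ≤ x₂ - t * deriv f w₂ := by
  by_contra! hcross
  set ε := (x₂ - x₁) / t
  have htε : t * ε = x₂ - x₁ := mul_div_cancel₀ _ ht.ne'
  have hε : 0 < ε := div_pos (sub_pos.2 hx) ht
  have hgap : deriv f w₁ + ε < deriv f w₂ := by nlinarith
  have hw : w₁ ≤ w₂ := (hf'.lt_iff_lt.1 (by linarith)).le
  have hcont : ContinuousOn (deriv f) (Icc w₁ w₂) :=
    (hf.continuous_deriv (by norm_num)).continuousOn
  obtain ⟨w₁', -, hw₁'⟩ := intermediate_value_Icc hw hcont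
    (⟨by linarith, hgap.le⟩ : deriv f w₁ + ε ∈ Icc (deriv f w₁) (deriv f w₂))
  obtain ⟨w₂', -, hw₂'⟩ := intermediate_value_Icc hw hcont
    (⟨by linarith, by linarith⟩ : deriv f w₂ - ε ∈ Icc (deriv f w₁) (deriv f w₂))
  -- `w₂'` at `x₁` and `w₁'` at `x₂` have the feet of `w₂` and `w₁`: exchange them.
  have h₁ := hw₁ w₂'
  have h₂ := hw₂ w₁'
  rw [eFun_eq hf hf'.monotone hφ ht.le, eFun_eq hf hf'.monotone hφ ht.le] at h₁ h₂
  rw [show x₁ - t * deriv f w₂' = x₂ - t * deriv f w₂ by rw [hw₂']; linear_combination htε] at h₁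
  rw [show x₂ - t * deriv f w₁' = x₁ - t * deriv f w₁ by rw [hw₁']; linear_combination -htε] at h₂
  have hex := legendreDual_add_lt (hf.differentiable (by norm_num)) hf'
    (hf'.lt_iff_lt.1 (by linarith) : w₁ < w₁') (hf'.lt_iff_lt.1 (by linarith) : w₁ < w₂')
    (hf'.lt_iff_lt.1 (by linarith) : w₁' < w₂) (hf'.lt_iff_lt.1 (by linarith) : w₂' < w₂)
    (by rw [hw₁', hw₂']; ring)
  linarith [mul_lt_mul_of_pos_left hex ht]

theorem tendsto_nhdsLT_uMinus (hf : ContDiff ℝ 2 f) (hf' : StrictMono (deriv f))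
    (hφ : ∀ a b, IntervalIntegrable φ volume a b) (hφM : ∀ y, |φ y| ≤ M) (ht : 0 < t)
    {ws : ℝ → ℝ} (hws : ∀ y, ws y ∈ maxSet f φ y t) (x : ℝ) :
    Tendsto ws (𝓝[<] x) (𝓝 (uMinus f φ x t)) := by
  refine isCompact_Icc.tendsto_nhds_of_unique_mapClusterPt
    (Eventually.of_forall fun y => maxSet_subset_Icc hf hf' hφ hφM ht y (hws y)) fun a _ ha => ?_
  obtain ⟨U, hU, hUa⟩ := mapClusterPt_iff_ultrafilter.1 ha
  have hUx : Tendsto id (U : Filter ℝ) (𝓝 x) := hU.trans nhdsWithin_le_nhds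
  have hfoot : Tendsto (fun y => y - t * deriv f (ws y)) U (𝓝 (x - t * deriv f a)) :=
    hUx.sub ((((hf.continuous_deriv (by norm_num)).tendsto a).comp hUa).const_mul t)
  refine (IsGreatest.csSup_eq ⟨mem_maxSet_of_tendsto hf hf'.monotone hφ ht hUx
    tendsto_const_nhds hUa (Eventually.of_forall hws), fun w hw => ?_⟩).symm
  have hleft : ∀ᶠ y in (U : Filter ℝ), y < x := hU self_mem_nhdsWithin
  have := le_of_tendsto hfoot (hleft.mono fun y hy => foot_le_foot hf hf' hφ ht hy (hws y) hw)
  exact hf'.le_iff_le.1 (le_of_mul_le_mul_left (by linarith) ht)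

theorem tendsto_nhdsGT_uPlus (hf : ContDiff ℝ 2 f) (hf' : StrictMono (deriv f))
    (hφ : ∀ a b, IntervalIntegrable φ volume a b) (hφM : ∀ y, |φ y| ≤ M) (ht : 0 < t)
    {ws : ℝ → ℝ} (hws : ∀ y, ws y ∈ maxSet f φ y t) (x : ℝ) :
    Tendsto ws (𝓝[>] x) (𝓝 (uPlus f φ x t)) := by
  refine isCompact_Icc.tendsto_nhds_of_unique_mapClusterPt
    (Eventually.of_forall fun y => maxSet_subset_Icc hf hf' hφ hφM ht y (hws y)) fun a _ ha => ?_
  obtain ⟨U, hU, hUa⟩ := mapClusterPt_iff_ultrafilter.1 ha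
  have hUx : Tendsto id (U : Filter ℝ) (𝓝 x) := hU.trans nhdsWithin_le_nhds
  have hfoot : Tendsto (fun y => y - t * deriv f (ws y)) U (𝓝 (x - t * deriv f a)) :=
    hUx.sub ((((hf.continuous_deriv (by norm_num)).tendsto a).comp hUa).const_mul t)
  refine (IsLeast.csInf_eq ⟨mem_maxSet_of_tendsto hf hf'.monotone hφ ht hUx
    tendsto_const_nhds hUa (Eventually.of_forall hws), fun w hw => ?_⟩).symm
  have hright : ∀ᶠ y in (U : Filter ℝ), x < y := hU self_mem_nhdsWithin
  have := ge_of_tendsto hfoot (hright.mono fun y hy => foot_le_foot hf hf' hφ ht hy hw (hws y))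
  exact hf'.le_iff_le.1 (le_of_mul_le_mul_left (by linarith) ht)

end Traces

/-- existence of strong one-sided traces, and limits of `u^±` along
converging sequences are maximizers. -/
theorem stmt2_strong_traces
    (f φ : ℝ → ℝ) (M : ℝ)
    (hf : ContDiff ℝ 2 f)
    (hconv : ∀ u : ℝ, 0 ≤ deriv (deriv f) u)
    (hdeg : volume {u : ℝ | deriv (deriv f) u = 0} = 0)
    (hφmeas : Measurable φ)
    (hφbdd : ∀ x : ℝ, |φ x| ≤ M) :
    (∀ x t : ℝ, 0 < t →
      Tendsto (fun x' : ℝ => uMinus f φ x' t) (nhdsWithin x (Set.Iio x))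
        (nhds (uMinus f φ x t)) ∧
      Tendsto (fun x' : ℝ => uPlus f φ x' t) (nhdsWithin x (Set.Iio x))
        (nhds (uMinus f φ x t)) ∧
      Tendsto (fun x' : ℝ => uMinus f φ x' t) (nhdsWithin x (Set.Ioi x))
        (nhds (uPlus f φ x t)) ∧
      Tendsto (fun x' : ℝ => uPlus f φ x' t) (nhdsWithin x (Set.Ioi x))
        (nhds (uPlus f φ x t))) ∧
    (∀ (x t : ℝ) (xs ts : ℕ → ℝ) (L : ℝ), 0 < t → (∀ n : ℕ, 0 < ts n) →
      Tendsto xs atTop (nhds x) → Tendsto ts atTop (nhds t) →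
      (Tendsto (fun n : ℕ => uPlus f φ (xs n) (ts n)) atTop (nhds L) →
        L ∈ maxSet f φ x t) ∧
      (Tendsto (fun n : ℕ => uMinus f φ (xs n) (ts n)) atTop (nhds L) →
        L ∈ maxSet f φ x t)) := by
  have hf' : StrictMono (deriv f) :=
    (monotone_of_deriv_nonneg ((hf.iterate_deriv' 1 1).differentiable one_ne_zero)
      hconv).strictMono_of_volume_deriv_eq_zero hdeg
  have hφ : ∀ a b, IntervalIntegrable φ volume a b := fun _ _ =>
    intervalIntegrable_const.mono_fun' hφmeas.aestronglyMeasurable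
      (ae_of_all _ fun y => (Real.norm_eq_abs _).trans_le (hφbdd y))
  have hmem_plus : ∀ {t : ℝ}, 0 < t → ∀ y, uPlus f φ y t ∈ maxSet f φ y t :=
    uPlus_mem_maxSet hf hf' hφ hφbdd
  have hmem_minus : ∀ {t : ℝ}, 0 < t → ∀ y, uMinus f φ y t ∈ maxSet f φ y t :=
    uMinus_mem_maxSet hf hf' hφ hφbdd
  refine ⟨fun x t ht => ⟨?_, ?_, ?_, ?_⟩,
    fun x t xs ts L ht hts hxs htl => ⟨fun hL => ?_, fun hL => ?_⟩⟩
  · exact tendsto_nhdsLT_uMinus hf hf' hφ hφbdd ht (hmem_minus ht) x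
  · exact tendsto_nhdsLT_uMinus hf hf' hφ hφbdd ht (hmem_plus ht) x
  · exact tendsto_nhdsGT_uPlus hf hf' hφ hφbdd ht (hmem_minus ht) x
  · exact tendsto_nhdsGT_uPlus hf hf' hφ hφbdd ht (hmem_plus ht) x
  · exact mem_maxSet_of_tendsto hf hf'.monotone hφ ht hxs htl hL
      (Eventually.of_forall fun n => hmem_plus (hts n) (xs n))
  · exact mem_maxSet_of_tendsto hf hf'.monotone hφ ht hxs htl hL
      (Eventually.of_forall fun n => hmem_minus (hts n) (xs n))
end

section
/- (Criteria for characteristic generation values via Dini derivatives.) For every x₀ ∈ ℝ: (i) every c ∈ C(x₀) satisfies D̄₋Φ(x₀) ≤ c ≤ D̲₊Φ(x₀); in particular, if D̄₋Φ(x₀) > D̲₊Φ(x₀) then C(x₀) = ∅; (ii) if D̄₋Φ(x₀) < D̲₊Φ(x₀), then the open interval (D̄₋Φ(x₀), D̲₊Φ(x₀)) is contained in C(x₀), and C(x₀) is contained in the closed interval [D̄₋Φ(x₀), D̲₊Φ(x₀)]. -/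
open MeasureTheory Filter Set

noncomputable def phiInt (φ : ℝ → ℝ) (x : ℝ) : ℝ := ∫ ξ in (0:ℝ)..x, φ ξ

noncomputable def dUpperLeft (φ : ℝ → ℝ) (x₀ : ℝ) : ℝ :=
  Filter.limsup (fun l : ℝ => (phiInt φ (x₀ + l) - phiInt φ x₀) / l)
    (nhdsWithin 0 (Set.Iio 0))

noncomputable def dLowerRight (φ : ℝ → ℝ) (x₀ : ℝ) : ℝ :=
  Filter.liminf (fun l : ℝ => (phiInt φ (x₀ + l) - phiInt φ x₀) / l)
    (nhdsWithin 0 (Set.Ioi 0))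

def charSet (f φ : ℝ → ℝ) (x₀ : ℝ) : Set ℝ :=
  {c : ℝ | ∃ t : ℝ, 0 < t ∧ c ∈ maxSet f φ (x₀ + t * deriv f c) t}

open intervalIntegral Topology

/-!
Put `x = x₀ + t f'(c)` and `l = t (f'(c) - f'(u))`. The substitution `ξ = x - t f'(s)` turns the
energy gap into `E(c) - E(u) = (Φ(x₀ + l) - Φ(x₀) - c l) + t D(c, u)`, where
`D(c, u) = f(c) - f(u) - f'(u) (c - u)` is the Bregman divergence of the convex function `f`.

(i) Since `0 ≤ D(c, u) ≤ (f'(u) - f'(c)) (u - c)`, maximality of `c` gives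
`Φ(x₀ + l) - Φ(x₀) ≥ u l`. As `u → c±`, strict monotonicity of `f'` lets `l` sweep a one-sided
neighbourhood of `0`, which squeezes the one-sided difference quotients of `Φ` against `c`.

(ii) If `c` lies strictly between the Dini derivatives, the first term is nonnegative for `|l| < δ`.
For `|l| ≥ δ` it is at least `-(M + |c|) |l|`, and this is beaten by `t D(c, u)`, which grows
linearly in `|f'(u) - f'(c)|`, as soon as `t` is small.
-/

section Calculus

variable {f : ℝ → ℝ}

lemma ContDiff.contDiff_one_deriv (hf : ContDiff ℝ 2 f) : ContDiff ℝ 1 (deriv f) :=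
  (contDiff_succ_iff_deriv (n := 1)).mp hf |>.2.2

lemma strictMono_of_deriv_nonneg_of_volume_deriv_eq_zero {g : ℝ → ℝ} (hg : Differentiable ℝ g)
    (hg' : ∀ x, 0 ≤ deriv g x) (hnull : volume {x | deriv g x = 0} = 0) : StrictMono g := by
  have hmono := monotone_of_deriv_nonneg hg hg'
  intro a b hab
  refine (hmono hab.le).lt_of_ne fun heq => ?_
  have hflat : Ioo a b ⊆ {x | deriv g x = 0} := fun x hx => by
    have hconst : g =ᶠ[𝓝 x] fun _ => g a := by
      filter_upwards [Ioo_mem_nhds hx.1 hx.2] with y hy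
      exact le_antisymm (heq ▸ hmono hy.2.le) (hmono hy.1.le)
    simp [hconst.deriv_eq]
  have := measure_mono_null hflat hnull
  rw [Real.volume_Ioo, ENNReal.ofReal_eq_zero] at this
  linarith

end Calculus

noncomputable def bregman (f : ℝ → ℝ) (c u : ℝ) : ℝ := f c - f u - deriv f u * (c - u)

section Bregman

variable {f : ℝ → ℝ}

lemma bregman_add_bregman (c u : ℝ) :
    bregman f c u + bregman f u c = (deriv f u - deriv f c) * (u - c) := by
  unfold bregman; ring

lemma bregman_eq_add_add (c w u : ℝ) :
    bregman f c u = bregman f c w + bregman f w u + (deriv f u - deriv f w) * (w - c) := by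
  unfold bregman; ring

variable (hf : Differentiable ℝ f) (hmono : Monotone (deriv f))
include hf hmono

lemma bregman_nonneg (c u : ℝ) : 0 ≤ bregman f c u := by
  have hconvex := hmono.convexOn_univ_of_deriv hf
  unfold bregman
  rcases lt_trichotomy u c with h | rfl | h
  · have := hconvex.deriv_le_slope trivial trivial h (hf u)
    rw [slope_def_field, le_div_iff₀ (sub_pos.2 h)] at this
    linarith
  · simp
  · have := hconvex.slope_le_deriv trivial trivial h (hf u)
    rw [slope_def_field, div_le_iff₀ (sub_pos.2 h)] at this
    linarith

lemma bregman_le (c u : ℝ) : bregman f c u ≤ (deriv f u - deriv f c) * (u - c) := by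
  linarith [bregman_add_bregman (f := f) c u, bregman_nonneg hf hmono u c]

lemma mul_sub_le_bregman (c w u : ℝ) : (deriv f u - deriv f w) * (w - c) ≤ bregman f c u := by
  linarith [bregman_eq_add_add (f := f) c w u, bregman_nonneg hf hmono c w,
    bregman_nonneg hf hmono w u]

lemma eventually_mul_abs_le_bregman (c : ℝ) {K : ℝ} (hK : 0 ≤ K) :
    ∀ᶠ B in atTop, ∀ u, B ≤ |deriv f u - deriv f c| →
      K * |deriv f u - deriv f c| ≤ bregman f c u := by
  -- past these thresholds, `mul_sub_le_bregman` at `w = c ± 2K` keeps half of the gap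
  filter_upwards [eventually_ge_atTop (2 * (deriv f (c + 2 * K) - deriv f c)),
    eventually_ge_atTop (2 * (deriv f c - deriv f (c - 2 * K)))] with B hBright hBleft u hu
  rcases le_total 0 (deriv f u - deriv f c) with hsign | hsign
  · rw [abs_of_nonneg hsign] at hu ⊢
    have := mul_sub_le_bregman hf hmono c (c + 2 * K) u
    nlinarith
  · rw [abs_of_nonpos hsign] at hu ⊢
    have := mul_sub_le_bregman hf hmono c (c - 2 * K) u
    nlinarith

end Bregman

lemma intervalIntegrable_of_abs_le {ψ : ℝ → ℝ} {C : ℝ} (hψ : Measurable ψ)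
    (hbound : ∀ x, |ψ x| ≤ C) (a b : ℝ) : IntervalIntegrable ψ volume a b :=
  (Measure.integrableOn_of_bounded (s := uIcc a b) (M := C) measure_Icc_lt_top.ne
    hψ.aestronglyMeasurable (ae_of_all _ hbound)).intervalIntegrable

section Increment

variable {φ : ℝ → ℝ} {M : ℝ} (hφmeas : Measurable φ) (hφbdd : ∀ x, |φ x| ≤ M)
include hφmeas hφbdd

lemma phiInt_add_sub (x₀ l : ℝ) :
    phiInt φ (x₀ + l) - phiInt φ x₀ = ∫ ξ in x₀..x₀ + l, φ ξ :=
  integral_interval_sub_left (intervalIntegrable_of_abs_le hφmeas hφbdd _ _)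
    (intervalIntegrable_of_abs_le hφmeas hφbdd _ _)

lemma abs_phiInt_add_sub_le (x₀ l : ℝ) : |phiInt φ (x₀ + l) - phiInt φ x₀| ≤ M * |l| := by
  rw [phiInt_add_sub hφmeas hφbdd]
  simpa using norm_integral_le_of_norm_le_const (a := x₀) (b := x₀ + l) fun x _ =>
    (Real.norm_eq_abs _).trans_le (hφbdd x)

end Increment

noncomputable def diffQuot (φ : ℝ → ℝ) (x₀ l : ℝ) : ℝ := (phiInt φ (x₀ + l) - phiInt φ x₀) / l

section DiffQuot

variable {φ : ℝ → ℝ} {M : ℝ} (hφmeas : Measurable φ) (hφbdd : ∀ x, |φ x| ≤ M)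
include hφmeas hφbdd

lemma abs_diffQuot_le (x₀ l : ℝ) : |diffQuot φ x₀ l| ≤ M := by
  rcases eq_or_ne l 0 with rfl | hl
  · simpa [diffQuot] using (abs_nonneg _).trans (hφbdd 0)
  · rw [diffQuot, abs_div, div_le_iff₀ (abs_pos.2 hl)]
    exact abs_phiInt_add_sub_le hφmeas hφbdd x₀ l

lemma isBoundedUnder_le_diffQuot (x₀ : ℝ) (F : Filter ℝ) :
    IsBoundedUnder (· ≤ ·) F (diffQuot φ x₀) :=
  isBoundedUnder_of_eventually_le (a := M) <| .of_forall fun l =>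
    le_of_abs_le (abs_diffQuot_le hφmeas hφbdd x₀ l)

lemma isBoundedUnder_ge_diffQuot (x₀ : ℝ) (F : Filter ℝ) :
    IsBoundedUnder (· ≥ ·) F (diffQuot φ x₀) :=
  isBoundedUnder_of_eventually_ge (a := -M) <| .of_forall fun l =>
    neg_le_of_abs_le (abs_diffQuot_le hφmeas hφbdd x₀ l)

end DiffQuot

section Energy

variable {f φ : ℝ → ℝ} (hf : ContDiff ℝ 2 f)
include hf

lemma integral_deriv2_mul_id (a b : ℝ) :
    ∫ s in a..b, deriv (deriv f) s * s = b * deriv f b - f b - (a * deriv f a - f a) := by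
  have hf' := hf.contDiff_one_deriv
  refine integral_eq_sub_of_hasDerivAt (f := fun s => s * deriv f s - f s) (fun s _ => ?_)
    (((hf'.continuous_deriv le_rfl).mul continuous_id).intervalIntegrable _ _)
  have := ((hasDerivAt_id s).mul (hf'.differentiable one_ne_zero s).hasDerivAt).sub
    (hf.differentiable two_ne_zero s).hasDerivAt
  exact this.congr_deriv (by simp only [one_mul, id_eq]; ring)

lemma mul_integral_deriv2_mul_comp (hconv : ∀ u, 0 ≤ deriv (deriv f) u) (x : ℝ) {t : ℝ}
    (ht : 0 ≤ t) (a b : ℝ) :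
    t * ∫ s in a..b, deriv (deriv f) s * φ (x - t * deriv f s)
      = ∫ ξ in x - t * deriv f b..x - t * deriv f a, φ ξ := by
  have hf' := hf.contDiff_one_deriv
  have hsubst := integral_comp_mul_deriv_of_deriv_nonpos (a := a) (b := b) (g := φ)
    (f := fun s => x - t * deriv f s) (f' := fun s => -(t * deriv (deriv f) s))
    (continuous_const.sub (continuous_const.mul hf'.continuous)).continuousOn
    (fun s _ => (((hf'.differentiable one_ne_zero s).hasDerivAt).const_mul t).const_sub x)
    (fun s _ => neg_nonpos.2 (mul_nonneg ht (hconv s)))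
  rw [integral_symm (x - t * deriv f a) (x - t * deriv f b), ← hsubst,
    ← intervalIntegral.integral_const_mul, ← intervalIntegral.integral_neg]
  congr 1 with s
  simp only [Function.comp_apply]
  ring

end Energy

theorem eFun_sub_eFun {f φ : ℝ → ℝ} {M : ℝ} (hf : ContDiff ℝ 2 f)
    (hconv : ∀ u, 0 ≤ deriv (deriv f) u) (hφmeas : Measurable φ) (hφbdd : ∀ x, |φ x| ≤ M)
    (x₀ c u : ℝ) {t : ℝ} (ht : 0 ≤ t) :
    eFun f φ c (x₀ + t * deriv f c) t - eFun f φ u (x₀ + t * deriv f c) t =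
      phiInt φ (x₀ + t * (deriv f c - deriv f u)) - phiInt φ x₀
        - c * (t * (deriv f c - deriv f u)) + t * bregman f c u := by
  set x := x₀ + t * deriv f c
  have hf'' : Continuous (deriv (deriv f)) := hf.contDiff_one_deriv.continuous_deriv le_rfl
  have hcomp : ∀ a b, IntervalIntegrable
      (fun s => deriv (deriv f) s * φ (x - t * deriv f s)) volume a b := fun a b =>
    (intervalIntegrable_of_abs_le (hφmeas.comp (continuous_const.sub
      (continuous_const.mul hf.contDiff_one_deriv.continuous)).measurable)
      (fun s => hφbdd _) a b).continuousOn_mul hf''.continuousOn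
  have hsplit : ∀ b, ∫ s in (0 : ℝ)..b, deriv (deriv f) s * (φ (x - t * deriv f s) - s) =
      (∫ s in (0 : ℝ)..b, deriv (deriv f) s * φ (x - t * deriv f s))
        - ∫ s in (0 : ℝ)..b, deriv (deriv f) s * s := fun b => by
    rw [← integral_sub (hcomp 0 b) (g := fun s => deriv (deriv f) s * s)
      ((hf''.mul continuous_id).intervalIntegrable 0 b)]
    simp only [mul_sub]
  have hφpart : t * ((∫ s in (0 : ℝ)..c, deriv (deriv f) s * φ (x - t * deriv f s))
      - ∫ s in (0 : ℝ)..u, deriv (deriv f) s * φ (x - t * deriv f s)) =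
      phiInt φ (x₀ + t * (deriv f c - deriv f u)) - phiInt φ x₀ := by
    rw [integral_interval_sub_left (hcomp 0 c) (hcomp 0 u),
      mul_integral_deriv2_mul_comp hf hconv x ht, phiInt_add_sub hφmeas hφbdd]
    congr 1 <;> ring
  unfold eFun bregman
  rw [hsplit, hsplit, integral_deriv2_mul_id hf, integral_deriv2_mul_id hf]
  linear_combination hφpart

section IntermediateValue

variable {g : ℝ → ℝ} {a b : ℝ} (hab : a ≤ b) (hg : ContinuousOn g (Icc a b)) (hgab : g b < g a)
include hab hg hgab

lemma eventually_nhdsLT_mem_image_Icc : ∀ᶠ y in 𝓝[<] g a, y ∈ g '' Icc a b :=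
  mem_of_superset (Ioo_mem_nhdsLT hgab) (Ioo_subset_Icc_self.trans (intermediate_value_Icc' hab hg))

lemma eventually_nhdsGT_mem_image_Icc : ∀ᶠ y in 𝓝[>] g b, y ∈ g '' Icc a b :=
  mem_of_superset (Ioo_mem_nhdsGT hgab) (Ioo_subset_Icc_self.trans (intermediate_value_Icc' hab hg))

end IntermediateValue

section Criteria

variable {f φ : ℝ → ℝ} {M : ℝ} (hf : ContDiff ℝ 2 f) (hconv : ∀ u, 0 ≤ deriv (deriv f) u)
  (hdeg : volume {u : ℝ | deriv (deriv f) u = 0} = 0)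
  (hφmeas : Measurable φ) (hφbdd : ∀ x, |φ x| ≤ M)

include hf hconv hφmeas hφbdd

lemma mem_maxSet_iff (x₀ c : ℝ) {t : ℝ} (ht : 0 ≤ t) :
    c ∈ maxSet f φ (x₀ + t * deriv f c) t ↔ ∀ u,
      0 ≤ phiInt φ (x₀ + t * (deriv f c - deriv f u)) - phiInt φ x₀
        - c * (t * (deriv f c - deriv f u)) + t * bregman f c u :=
  forall_congr' fun u => by rw [← eFun_sub_eFun hf hconv hφmeas hφbdd x₀ c u ht, sub_nonneg]

lemma mul_le_phiInt_sub_of_mem_maxSet {x₀ c t : ℝ} (ht : 0 ≤ t)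
    (hmax : c ∈ maxSet f φ (x₀ + t * deriv f c) t) (u : ℝ) :
    u * (t * (deriv f c - deriv f u)) ≤
      phiInt φ (x₀ + t * (deriv f c - deriv f u)) - phiInt φ x₀ := by
  have hmono := monotone_of_deriv_nonneg (hf.contDiff_one_deriv.differentiable one_ne_zero) hconv
  have hmax_u := (mem_maxSet_iff hf hconv hφmeas hφbdd x₀ c ht).1 hmax u
  have hbregman := mul_le_mul_of_nonneg_left
    (bregman_le (hf.differentiable two_ne_zero) hmono c u) ht
  linarith

include hdeg

lemma dUpperLeft_le_of_mem_maxSet {x₀ c t : ℝ} (ht : 0 < t)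
    (hmax : c ∈ maxSet f φ (x₀ + t * deriv f c) t) : dUpperLeft φ x₀ ≤ c := by
  have hf' := hf.contDiff_one_deriv
  have hsm := strictMono_of_deriv_nonneg_of_volume_deriv_eq_zero
    (hf'.differentiable one_ne_zero) hconv hdeg
  change limsup (diffQuot φ x₀) (𝓝[<] 0) ≤ c
  refine le_of_forall_pos_le_add fun ε hε =>
    limsup_le_of_le (isBoundedUnder_ge_diffQuot hφmeas hφbdd x₀ _).isCoboundedUnder_le ?_
  have himage := eventually_nhdsLT_mem_image_Icc (g := fun u => t * (deriv f c - deriv f u))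
    (le_add_of_nonneg_right hε.le)
    (continuous_const.mul (continuous_const.sub hf'.continuous)).continuousOn
    (mul_lt_mul_of_pos_left (sub_lt_sub_left (hsm (lt_add_of_pos_right c hε)) _) ht)
  rw [sub_self, mul_zero] at himage
  filter_upwards [himage, self_mem_nhdsWithin] with l ⟨u, hu, hlu⟩ (hl : l < 0)
  subst hlu
  rw [diffQuot, div_le_iff_of_neg hl]
  nlinarith [mul_le_phiInt_sub_of_mem_maxSet hf hconv hφmeas hφbdd ht.le hmax u, hu.2]

lemma le_dLowerRight_of_mem_maxSet {x₀ c t : ℝ} (ht : 0 < t)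
    (hmax : c ∈ maxSet f φ (x₀ + t * deriv f c) t) : c ≤ dLowerRight φ x₀ := by
  have hf' := hf.contDiff_one_deriv
  have hsm := strictMono_of_deriv_nonneg_of_volume_deriv_eq_zero
    (hf'.differentiable one_ne_zero) hconv hdeg
  change c ≤ liminf (diffQuot φ x₀) (𝓝[>] 0)
  refine le_of_forall_pos_le_add fun ε hε => sub_le_iff_le_add.1 <|
    le_liminf_of_le (isBoundedUnder_le_diffQuot hφmeas hφbdd x₀ _).isCoboundedUnder_ge ?_
  have himage := eventually_nhdsGT_mem_image_Icc (g := fun u => t * (deriv f c - deriv f u))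
    (sub_le_self c hε.le)
    (continuous_const.mul (continuous_const.sub hf'.continuous)).continuousOn
    (mul_lt_mul_of_pos_left (sub_lt_sub_left (hsm (sub_lt_self c hε)) _) ht)
  rw [sub_self, mul_zero] at himage
  filter_upwards [himage, self_mem_nhdsWithin] with l ⟨u, hu, hlu⟩ (hl : 0 < l)
  subst hlu
  rw [diffQuot, le_div_iff₀ hl]
  nlinarith [mul_le_phiInt_sub_of_mem_maxSet hf hconv hφmeas hφbdd ht.le hmax u, hu.1]

end Criteria

section Existence

variable {φ : ℝ → ℝ} {M : ℝ} (hφmeas : Measurable φ) (hφbdd : ∀ x, |φ x| ≤ M)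
include hφmeas hφbdd

lemma eventually_mul_le_phiInt_sub {x₀ c : ℝ} (hleft : dUpperLeft φ x₀ < c)
    (hright : c < dLowerRight φ x₀) :
    ∀ᶠ l in 𝓝 0, c * l ≤ phiInt φ (x₀ + l) - phiInt φ x₀ := by
  have hlt : ∀ᶠ l in 𝓝[<] 0, c * l ≤ phiInt φ (x₀ + l) - phiInt φ x₀ := by
    filter_upwards [eventually_lt_of_limsup_lt hleft (isBoundedUnder_le_diffQuot hφmeas hφbdd x₀ _),
      self_mem_nhdsWithin] with l hq (hl : l < 0)
    rw [div_lt_iff_of_neg hl] at hq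
    exact hq.le
  have hgt : ∀ᶠ l in 𝓝[>] 0, c * l ≤ phiInt φ (x₀ + l) - phiInt φ x₀ := by
    filter_upwards
      [eventually_lt_of_lt_liminf hright (isBoundedUnder_ge_diffQuot hφmeas hφbdd x₀ _),
      self_mem_nhdsWithin] with l hq (hl : 0 < l)
    rw [lt_div_iff₀ hl] at hq
    exact hq.le
  rw [← nhdsNE_sup_pure, ← nhdsLT_sup_nhdsGT]
  exact eventually_sup.2 ⟨eventually_sup.2 ⟨hlt, hgt⟩, by simp⟩

variable {f : ℝ → ℝ} (hf : ContDiff ℝ 2 f) (hconv : ∀ u, 0 ≤ deriv (deriv f) u)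
include hf hconv

lemma mem_charSet_of_dUpperLeft_lt_of_lt_dLowerRight {x₀ c : ℝ}
    (hleft : dUpperLeft φ x₀ < c) (hright : c < dLowerRight φ x₀) : c ∈ charSet f φ x₀ := by
  have hM : 0 ≤ M := (abs_nonneg _).trans (hφbdd 0)
  have hdiff := hf.differentiable two_ne_zero
  have hmono := monotone_of_deriv_nonneg (hf.contDiff_one_deriv.differentiable one_ne_zero) hconv
  obtain ⟨δ, hδ, hnear⟩ := Metric.eventually_nhds_iff.1
    (eventually_mul_le_phiInt_sub hφmeas hφbdd hleft hright)
  obtain ⟨B, hfar, hB⟩ := ((eventually_mul_abs_le_bregman hdiff hmono c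
    (K := M + |c|) (by positivity)).and (eventually_gt_atTop 0)).exists
  have ht : 0 < δ / B := div_pos hδ hB
  refine ⟨δ / B, ht, (mem_maxSet_iff hf hconv hφmeas hφbdd x₀ c ht.le).2 fun u => ?_⟩
  have habs : |δ / B * (deriv f c - deriv f u)| = δ / B * |deriv f u - deriv f c| := by
    rw [abs_mul, abs_of_pos ht, abs_sub_comm]
  rcases lt_or_ge |δ / B * (deriv f c - deriv f u)| δ with hsmall | hlarge
  · have := hnear (by rwa [Real.dist_eq, sub_zero])
    have := mul_nonneg ht.le (bregman_nonneg hdiff hmono c u)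
    linarith
  · have hgap : B ≤ |deriv f u - deriv f c| := by
      by_contra! hlt
      have : δ / B * |deriv f u - deriv f c| < δ / B * B := mul_lt_mul_of_pos_left hlt ht
      rw [div_mul_cancel₀ _ hB.ne'] at this
      linarith
    have hincr := neg_le_of_abs_le (abs_phiInt_add_sub_le hφmeas hφbdd x₀
      (δ / B * (deriv f c - deriv f u)))
    have hbregman := mul_le_mul_of_nonneg_left (hfar u hgap) ht.le
    have hlin := le_abs_self (c * (δ / B * (deriv f c - deriv f u)))
    rw [habs] at hincr
    rw [abs_mul c, habs] at hlin
    nlinarith [abs_nonneg c]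

end Existence

/-- criteria for characteristic generation values via Dini derivatives. -/
theorem stmt10_characteristic_generation_criteria
    (f φ : ℝ → ℝ) (M : ℝ)
    (hf : ContDiff ℝ 2 f)
    (hconv : ∀ u : ℝ, 0 ≤ deriv (deriv f) u)
    (hdeg : volume {u : ℝ | deriv (deriv f) u = 0} = 0)
    (hφmeas : Measurable φ)
    (hφbdd : ∀ x : ℝ, |φ x| ≤ M) :
    ∀ x₀ : ℝ,
      (∀ c ∈ charSet f φ x₀, dUpperLeft φ x₀ ≤ c ∧ c ≤ dLowerRight φ x₀) ∧
      (dLowerRight φ x₀ < dUpperLeft φ x₀ → charSet f φ x₀ = ∅) ∧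
      (dUpperLeft φ x₀ < dLowerRight φ x₀ →
        Set.Ioo (dUpperLeft φ x₀) (dLowerRight φ x₀) ⊆ charSet f φ x₀ ∧
        charSet f φ x₀ ⊆ Set.Icc (dUpperLeft φ x₀) (dLowerRight φ x₀)) := by
  intro x₀
  have hbounds : ∀ c ∈ charSet f φ x₀, dUpperLeft φ x₀ ≤ c ∧ c ≤ dLowerRight φ x₀ :=
    fun c ⟨t, ht, hmax⟩ => ⟨dUpperLeft_le_of_mem_maxSet hf hconv hdeg hφmeas hφbdd ht hmax,
      le_dLowerRight_of_mem_maxSet hf hconv hdeg hφmeas hφbdd ht hmax⟩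
  refine ⟨hbounds, fun hlt => eq_empty_of_forall_notMem fun c hc => ?_, fun _ =>
    ⟨fun c hc => mem_charSet_of_dUpperLeft_lt_of_lt_dLowerRight hφmeas hφbdd hf hconv hc.1 hc.2,
      hbounds⟩⟩
  linarith [hbounds c hc]
end
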